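/- Let μ be a finitely supported symmetric probability measure on Homeo⁺(ℝ) such that the Lebesgue measure on ℝ is P-invariant, i.e. Σ_g μ(g)·g_*(Leb) = Leb. Then the pair (G, μ), where G is the group generated by the support of μ, has the Derriennic property: for every x ∈ ℝ, Σ_g μ(g)·g(x) = x. -/

import Mathlib

open scoped NNReal ENNReal
open MeasureTheory Filter Topology Set Function

noncomputable section

/-- The group `Homeo⁺(ℝ)` of orientation-preserving homeomorphisms of the real line,
modelled as the group of order-isomorphisms of `ℝ`: an orientation-preserving
homeomorphism of `ℝ` is precisely a strictly increasing bijection of `ℝ`, i.e. an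
order isomorphism (and every order isomorphism of `ℝ` is a homeomorphism). -/
abbrev H : Type := ℝ ≃o ℝ

/-!
Stationarity of Lebesgue measure says that `x ↦ ∑ μ(g) g⁻¹(x)` changes the length of no
interval, so it is a translation `x ↦ x + c`; by symmetry of `μ` so is `x ↦ ∑ μ(g) g(x)`, and it
remains to show `c = 0`. Summing, `∑ μ(g) (g(x) + g⁻¹(x) - 2x) = 2c` for all `x`. By Young's
identity `∫ₐᵇ g + ∫_{g a}^{g b} g⁻¹ = b g(b) - a g(a)`, the integral of `g + g⁻¹ - 2x` over
`[a, b]` is `J_g(b) - J_g(a)`, where `J_g ≥ 0` is an area cut out by the graph of `g`. So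
`t ↦ ∑ μ(g) J_g(t)` is a nonnegative affine function with slope `2c`, whence `c = 0`.
-/

open Asymptotics in
theorem hasDerivAt_zero_of_abs_sub_le {F f : ℝ → ℝ} {x : ℝ} (hf : ContinuousAt f x)
    (hF : ∀ y, |F y - F x| ≤ |y - x| * |f y - f x|) : HasDerivAt F 0 x := by
  rw [hasDerivAt_iff_isLittleO_nhds_zero]
  simp only [smul_zero, sub_zero]
  have hsmall : (fun h => f (x + h) - f x) =o[𝓝 0] fun _ => (1 : ℝ) := by
    rw [isLittleO_one_iff, tendsto_sub_nhds_zero_iff]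
    exact hf.tendsto.comp (by simpa using (continuous_const_add x).tendsto 0)
  have hbig : (fun h => F (x + h) - F x) =O[𝓝 0] fun h => h * (f (x + h) - f x) :=
    IsBigO.of_bound' (Eventually.of_forall fun h => by simpa [abs_mul] using hF (x + h))
  simpa using hbig.trans_isLittleO ((isBigO_refl (fun h : ℝ => h) _).mul_isLittleO hsmall)

theorem eq_of_abs_sub_le_mul_abs_sub {F f : ℝ → ℝ} (hf : Continuous f)
    (hF : ∀ x y, |F y - F x| ≤ |y - x| * |f y - f x|) (a b : ℝ) : F a = F b :=
  have hderiv (x : ℝ) : HasDerivAt F 0 x := hasDerivAt_zero_of_abs_sub_le hf.continuousAt (hF x)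
  is_const_of_deriv_eq_zero (fun x => (hderiv x).differentiableAt) (fun x => (hderiv x).deriv) a b

theorem Monotone.mul_le_intervalIntegral {f : ℝ → ℝ} (hf : Monotone f) {s t : ℝ}
    (hst : s ≤ t) :
    (t - s) * f s ≤ ∫ x in s..t, f x := by
  simpa [mul_comm] using intervalIntegral.integral_mono_on (μ := volume) hst
    intervalIntegrable_const hf.intervalIntegrable fun x hx => hf hx.1

theorem Monotone.intervalIntegral_le_mul {f : ℝ → ℝ} (hf : Monotone f) {s t : ℝ}
    (hst : s ≤ t) :
    ∫ x in s..t, f x ≤ (t - s) * f t := by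
  simpa [mul_comm] using intervalIntegral.integral_mono_on (μ := volume) hst hf.intervalIntegrable
    intervalIntegrable_const fun x hx => hf hx.2

theorem eq_zero_of_forall_nonneg_add_mul {k C : ℝ} (h : ∀ t, 0 ≤ k + C * t) : C = 0 := by
  by_contra hC
  have := h (-(|k| + 1) / C)
  rw [mul_div_cancel₀ _ hC] at this
  linarith [le_abs_self k]

namespace OrderIso

variable (g : ℝ ≃o ℝ)

theorem abs_integral_add_integral_symm_sub_le {s t : ℝ} (hst : s ≤ t) :
    |(∫ x in s..t, g x) + (∫ y in g s..g t, g.symm y) - (t * g t - s * g s)|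
      ≤ (t - s) * (g t - g s) := by
  have hgst := g.monotone hst
  have h₁ := g.monotone.mul_le_intervalIntegral hst
  have h₂ := g.monotone.intervalIntegral_le_mul hst
  have h₃ := g.symm.monotone.mul_le_intervalIntegral hgst
  have h₄ := g.symm.monotone.intervalIntegral_le_mul hgst
  simp only [symm_apply_apply] at h₃ h₄
  rw [abs_le]
  constructor <;> nlinarith

/-- Young's identity. No differentiability is needed: the defect on `[s, t]` is at most
`(t - s) (g t - g s) = o(t - s)`, so as a function of the right endpoint it has zero derivative. -/
theorem integral_add_integral_symm (a b : ℝ) :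
    (∫ x in a..b, g x) + (∫ y in g a..g b, g.symm y) = b * g b - a * g a := by
  set F : ℝ → ℝ := fun t => (∫ x in a..t, g x) + (∫ y in g a..g t, g.symm y) - t * g t
  have hF : ∀ s t, s ≤ t → |F t - F s| ≤ |t - s| * |g t - g s| := by
    intro s t hst
    rw [abs_of_nonneg (sub_nonneg.2 hst), abs_of_nonneg (sub_nonneg.2 (g.monotone hst))]
    convert g.abs_integral_add_integral_symm_sub_le hst using 2
    rw [← intervalIntegral.integral_interval_sub_left g.monotone.intervalIntegrable
        g.monotone.intervalIntegrable,
      ← intervalIntegral.integral_interval_sub_left g.symm.monotone.intervalIntegrable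
        g.symm.monotone.intervalIntegrable]
    ring
  have hconst := eq_of_abs_sub_le_mul_abs_sub g.continuous (F := F) (fun s t => by
    rcases le_total s t with hst | hts
    · exact hF s t hst
    · rw [abs_sub_comm, abs_sub_comm t, abs_sub_comm (g t)]; exact hF t s hts) a b
  simp only [F, intervalIntegral.integral_same] at hconst
  linarith

/-- The area enclosed by the graph of `g` and the lines `x = t` and `y = t`. -/
def excessArea (t : ℝ) : ℝ := ∫ y in t..g t, (t - g.symm y)

theorem excessArea_nonneg (t : ℝ) : 0 ≤ g.excessArea t := by
  rcases le_total t (g t) with h | h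
  · refine intervalIntegral.integral_nonneg h fun y hy => sub_nonneg.2 ?_
    simpa using g.symm.monotone hy.2
  · rw [excessArea, intervalIntegral.integral_symm, ← intervalIntegral.integral_neg]
    refine intervalIntegral.integral_nonneg h fun y hy => neg_nonneg.2 (sub_nonpos.2 ?_)
    simpa using g.symm.monotone hy.1

theorem integral_apply_add_symm_sub_two_mul (a b : ℝ) :
    ∫ x in a..b, (g x + g.symm x - 2 * x) = g.excessArea b - g.excessArea a := by
  have hg : ∀ s t, IntervalIntegrable g volume s t := fun _ _ => g.monotone.intervalIntegrable
  have hg' : ∀ s t, IntervalIntegrable g.symm volume s t :=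
    fun _ _ => g.symm.monotone.intervalIntegrable
  have hyoung := g.integral_add_integral_symm a b
  have hsplit₁ := intervalIntegral.integral_add_adjacent_intervals (hg' a (g a)) (hg' (g a) b)
  have hsplit₂ := intervalIntegral.integral_add_adjacent_intervals (hg' (g a) (g b)) (hg' (g b) b)
  have hswap := intervalIntegral.integral_symm (f := g.symm) (μ := volume) b (g b)
  simp only [excessArea]
  rw [intervalIntegral.integral_sub ((hg a b).add (hg' a b))
      ((continuous_const_mul 2).intervalIntegrable a b),
    intervalIntegral.integral_add (hg a b) (hg' a b), intervalIntegral.integral_const_mul,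
    integral_id, intervalIntegral.integral_sub intervalIntegrable_const (hg' _ _),
    intervalIntegral.integral_sub intervalIntegrable_const (hg' _ _),
    intervalIntegral.integral_const, intervalIntegral.integral_const, smul_eq_mul, smul_eq_mul]
  linarith

theorem map_volume_Ioc (a b : ℝ) :
    volume.map g (Ioc a b) = ENNReal.ofReal (g.symm b - g.symm a) := by
  rw [Measure.map_apply g.continuous.measurable measurableSet_Ioc, g.preimage_Ioc, Real.volume_Ioc]

end OrderIso

theorem eq_zero_of_forall_sum_mul_apply_add_symm_sub_two_mul_eq {s : Finset (ℝ ≃o ℝ)}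
    {w : (ℝ ≃o ℝ) → ℝ} (hw : ∀ g ∈ s, 0 ≤ w g) {C : ℝ}
    (hC : ∀ x, ∑ g ∈ s, w g * (g x + g.symm x - 2 * x) = C) : C = 0 := by
  refine eq_zero_of_forall_nonneg_add_mul (k := ∑ g ∈ s, w g * g.excessArea 0) fun t => ?_
  have hint : ∫ x in 0..t, ∑ g ∈ s, w g * (g x + g.symm x - 2 * x)
      = ∑ g ∈ s, w g * (g.excessArea t - g.excessArea 0) := by
    rw [intervalIntegral.integral_finsetSum fun g _ => by
      apply Continuous.intervalIntegrable; fun_prop]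
    simp only [intervalIntegral.integral_const_mul, OrderIso.integral_apply_add_symm_sub_two_mul]
  rw [intervalIntegral.integral_congr fun x _ => hC x, intervalIntegral.integral_const, smul_eq_mul,
    sub_zero] at hint
  simp only [mul_sub, Finset.sum_sub_distrib] at hint
  have hnonneg : 0 ≤ ∑ g ∈ s, w g * g.excessArea t :=
    Finset.sum_nonneg fun g hg => mul_nonneg (hw g hg) (g.excessArea_nonneg t)
  linarith

theorem Set.Finite.toReal_tsum_coe_mul_ofReal {α : Type*} {μ : α → ℝ≥0}
    (hfin : {g | μ g ≠ 0}.Finite) {r : α → ℝ} (hr : ∀ g, 0 ≤ r g) :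
    (∑' g, (μ g : ℝ≥0∞) * ENNReal.ofReal (r g)).toReal
      = ∑ g ∈ hfin.toFinset, (μ g : ℝ) * r g := by
  rw [tsum_eq_sum (s := hfin.toFinset) fun g hg => by simp_all,
    ENNReal.toReal_sum fun g _ => ENNReal.mul_ne_top ENNReal.coe_ne_top ENNReal.ofReal_ne_top]
  simp only [ENNReal.toReal_mul, ENNReal.coe_toReal, ENNReal.toReal_ofReal (hr _)]

section

variable {μ : H → ℝ≥0} (hfin : {g : H | μ g ≠ 0}.Finite)

theorem sum_toFinset_coe_eq_one (hprob : ∑' g : H, (μ g : ℝ≥0∞) = 1) :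
    ∑ g ∈ hfin.toFinset, (μ g : ℝ) = 1 := by
  simpa [hprob] using (hfin.toReal_tsum_coe_mul_ofReal (r := fun _ => 1) fun _ => zero_le_one).symm

theorem sum_toFinset_mul_symm_sub_symm
    (hleb : Measure.sum (fun g : H => (μ g : ℝ≥0∞) • (volume : Measure ℝ).map g)
      = (volume : Measure ℝ)) {a b : ℝ} (hab : a ≤ b) :
    ∑ g ∈ hfin.toFinset, (μ g : ℝ) * (g.symm b - g.symm a) = b - a := by
  have hIoc := congrArg (fun ν : Measure ℝ => (ν (Ioc a b)).toReal) hleb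
  simp only [Measure.sum_apply _ measurableSet_Ioc, Measure.smul_apply, smul_eq_mul,
    OrderIso.map_volume_Ioc, Real.volume_Ioc] at hIoc
  rwa [hfin.toReal_tsum_coe_mul_ofReal fun g => sub_nonneg.2 (g.symm.monotone hab),
    ENNReal.toReal_ofReal (sub_nonneg.2 hab)] at hIoc

theorem sum_toFinset_mul_symm_apply (hsymm : ∀ g : H, μ g = μ g⁻¹) (x : ℝ) :
    ∑ g ∈ hfin.toFinset, (μ g : ℝ) * g.symm x
      = ∑ g ∈ hfin.toFinset, (μ g : ℝ) * g x :=
  Finset.sum_equiv (Equiv.inv H) (by simp [← hsymm]) fun g _ => by rw [hsymm]; rfl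

end

/-- If the Lebesgue measure is stationary for a finitely supported
symmetric probability measure μ on Homeo⁺(ℝ), then (G, μ) has the Derriennic property:
Σ_g μ(g)·g(x) = x for every x. -/
theorem derriennic_of_lebesgue_stationary
    (μ : H → ℝ≥0)
    (hfin : {g : H | μ g ≠ 0}.Finite)
    (hprob : ∑' g : H, (μ g : ℝ≥0∞) = 1)
    (hsymm : ∀ g : H, μ g = μ g⁻¹)
    (hleb : Measure.sum (fun g : H => (μ g : ℝ≥0∞) • (volume : Measure ℝ).map g)
      = (volume : Measure ℝ)) :
    ∀ x : ℝ, (∑ᶠ g : H, (μ g : ℝ) * g x) = x := by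
  set avg : ℝ → ℝ := fun x => ∑ g ∈ hfin.toFinset, (μ g : ℝ) * g x
  have havg : ∀ x, avg x = x + avg 0 := by
    have hstep : ∀ a b, a ≤ b → avg b - avg a = b - a := fun a b hab => by
      simp only [avg]
      rw [← sum_toFinset_mul_symm_apply hfin hsymm, ← sum_toFinset_mul_symm_apply hfin hsymm,
        ← Finset.sum_sub_distrib, ← sum_toFinset_mul_symm_sub_symm hfin hleb hab]
      simp only [mul_sub]
    intro x
    rcases le_total 0 x with h | h <;> linarith [hstep _ _ h]
  have hdrift : ∀ x,
      ∑ g ∈ hfin.toFinset, (μ g : ℝ) * (g x + g.symm x - 2 * x) = 2 * avg 0 := fun x => by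
    simp only [mul_sub, mul_add, Finset.sum_add_distrib, Finset.sum_sub_distrib,
      sum_toFinset_mul_symm_apply hfin hsymm, mul_left_comm _ (2 : ℝ), ← Finset.mul_sum,
      ← Finset.sum_mul, sum_toFinset_coe_eq_one hfin hprob]
    linarith [havg x]
  have havg0 : avg 0 = 0 := by
    linarith [eq_zero_of_forall_sum_mul_apply_add_symm_sub_two_mul_eq
      (fun g _ => (μ g).coe_nonneg) hdrift]
  intro x
  rw [finsum_eq_sum_of_support_subset (s := hfin.toFinset) _
    fun g hg => by simpa using left_ne_zero_of_mul hg]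
  linarith [havg x]
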